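/- arXiv:1701.07529 — 2 statements merged into one kernel-verified Lean document; each statement's English description precedes it below -/
import Mathlib

section
/- Let K be the N×N cyclic shift matrix and 𝒦(ν̃) the real-parameter shift operator (𝒦(s+ν) = K^s((1−ν)I + νK) for s = ⌊ν̃⌋). Let Å ∈ ℝ^{N×M}. If φ ∈ ℝ^M is an eigenvector of Å^T Å with eigenvalue λ, then φ is an eigenvector of (𝒦(ν̃)Å)^T(𝒦(ν̃)Å) with eigenvalue λ plus a perturbation term: (𝒦(ν̃)Å)^T(𝒦(ν̃)Å)φ = λφ + ν(1−ν)·Å^T(K + K^T − 2I)Å φ, where ν is the fractional part of ν̃. -/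
/-!
`cyc N` is a permutation matrix, hence orthogonal, and so are its powers and those of its
transpose. Writing `𝒦(x) = P K(ν)` with `P` orthogonal, the Gram matrix of `𝒦(x) A` is
`Aᵀ K(ν)ᵀ K(ν) A`, and expanding `K(ν) = (1 - ν) I + ν C` with `Cᵀ C = I` gives
`K(ν)ᵀ K(ν) = I + ν (1 - ν) (C + Cᵀ - 2 I)`. Applied to the eigenvector `φ` of `Aᵀ A`, this
leaves exactly the stated perturbation term.
-/

open Matrix BigOperators

def cyc (N : ℕ) : Matrix (Fin N) (Fin N) ℝ :=
  fun i j => if ((j : ℕ) + 1) % N = (i : ℕ) then 1 else 0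

noncomputable def Kmat (N : ℕ) (ν : ℝ) : Matrix (Fin N) (Fin N) ℝ :=
  (1 - ν) • (1 : Matrix (Fin N) (Fin N) ℝ) + ν • cyc N

noncomputable def Kt (N : ℕ) (x : ℝ) : Matrix (Fin N) (Fin N) ℝ :=
  if 0 ≤ ⌊x⌋ then (cyc N) ^ (⌊x⌋).toNat * Kmat N (Int.fract x)
  else ((cyc N)ᵀ) ^ (-⌊x⌋).toNat * Kmat N (Int.fract x)

section Orthogonal

variable {n R : Type*} [Fintype n] [DecidableEq n] [CommRing R]

lemma transpose_pow_mul_pow_of_transpose_mul_self {Q : Matrix n n R} (hQ : Qᵀ * Q = 1)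
    (k : ℕ) : (Q ^ k)ᵀ * Q ^ k = 1 := by
  have hcomm : Commute Qᵀ Q := hQ.trans (mul_eq_one_comm.mp hQ).symm
  rw [transpose_pow, ← hcomm.mul_pow, hQ, one_pow]

lemma transpose_mul_self_mul_of_transpose_mul_self {Q : Matrix n n R} (hQ : Qᵀ * Q = 1)
    (B : Matrix n n R) : (Q * B)ᵀ * (Q * B) = Bᵀ * B := by
  rw [transpose_mul, Matrix.mul_assoc, ← Matrix.mul_assoc Qᵀ, hQ, Matrix.one_mul]

lemma transpose_mul_self_one_sub_smul_one_add_smul {C : Matrix n n R} (hC : Cᵀ * C = 1)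
    (ν : R) :
    ((1 - ν) • (1 : Matrix n n R) + ν • C)ᵀ * ((1 - ν) • 1 + ν • C)
      = 1 + (ν * (1 - ν)) • (C + Cᵀ - 2) := by
  simp only [transpose_add, transpose_smul, transpose_one, Matrix.add_mul, Matrix.mul_add,
    Matrix.smul_mul, Matrix.mul_smul, Matrix.one_mul, Matrix.mul_one, hC]
  rw [← one_add_one_eq_two, ← two_smul R (1 : Matrix n n R)]
  module

end Orthogonal

lemma val_finRotate {N : ℕ} (j : Fin N) : (finRotate N j : ℕ) = ((j : ℕ) + 1) % N := by
  have : NeZero N := j.neZero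
  rw [finRotate_apply, Fin.val_add, Fin.val_one', Nat.add_mod_mod]

lemma cyc_eq_transpose_permMatrix_finRotate (N : ℕ) :
    cyc N = ((finRotate N).permMatrix ℝ)ᵀ := by
  ext i j
  simp only [cyc, transpose_apply, PEquiv.toMatrix_apply, Equiv.toPEquiv_apply, Option.mem_def,
    Option.some_inj, Fin.ext_iff, val_finRotate]

lemma transpose_cyc_mul_cyc (N : ℕ) : (cyc N)ᵀ * cyc N = 1 := by
  rw [cyc_eq_transpose_permMatrix_finRotate, transpose_transpose, transpose_permMatrix,
    ← permMatrix_mul, inv_mul_cancel, permMatrix_one]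

lemma transpose_Kt_mul_Kt (N : ℕ) (x : ℝ) :
    (Kt N x)ᵀ * Kt N x
      = 1 + (Int.fract x * (1 - Int.fract x)) • (cyc N + (cyc N)ᵀ - 2) := by
  have hcyc := transpose_cyc_mul_cyc N
  have hcycT : (cyc N)ᵀᵀ * (cyc N)ᵀ = 1 := by
    rw [transpose_transpose]
    exact mul_eq_one_comm.mp hcyc
  rw [Kt]
  split_ifs
  · rw [transpose_mul_self_mul_of_transpose_mul_self
      (transpose_pow_mul_pow_of_transpose_mul_self hcyc _)]
    exact transpose_mul_self_one_sub_smul_one_add_smul hcyc _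
  · rw [transpose_mul_self_mul_of_transpose_mul_self
      (transpose_pow_mul_pow_of_transpose_mul_self hcycT _)]
    exact transpose_mul_self_one_sub_smul_one_add_smul hcyc _

theorem shifted_gram_eigenvector (N M : ℕ) (x : ℝ)
    (A : Matrix (Fin N) (Fin M) ℝ) (φ : Fin M → ℝ) (lam : ℝ)
    (h : (Aᵀ * A) *ᵥ φ = lam • φ) :
    ((Kt N x * A)ᵀ * (Kt N x * A)) *ᵥ φ
      = lam • φ + (Int.fract x * (1 - Int.fract x)) •
          ((Aᵀ * (cyc N + (cyc N)ᵀ - 2) * A) *ᵥ φ) := by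
  have hgram : (Kt N x * A)ᵀ * (Kt N x * A)
      = Aᵀ * A + (Int.fract x * (1 - Int.fract x)) • (Aᵀ * (cyc N + (cyc N)ᵀ - 2) * A) := by
    rw [transpose_mul, Matrix.mul_assoc, ← Matrix.mul_assoc (Kt N x)ᵀ, transpose_Kt_mul_Kt,
      Matrix.add_mul, Matrix.one_mul, Matrix.mul_add, Matrix.smul_mul, Matrix.mul_smul,
      Matrix.mul_assoc]
  rw [hgram, add_mulVec, h, smul_mulVec]
end

section
/- Let K be the N×N cyclic shift matrix and suppose a ∈ ℝ^N has cyclic period L (i.e., L is the smallest positive integer with K^L a = a). If a is non-constant, b ∈ ℝ^N, and g(ν̃) = b − 𝒦(ν̃)^T a, then g is periodic with period L: g(ν̃ + L) = g(ν̃) for all ν̃ ∈ ℝ, and no smaller positive period exists. -/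
/-!
Write ρ = `finRotate N` for the rotation i ↦ i + 1 of `Fin N`. Then `(Kt N x)ᵀ *ᵥ a` is the convex
combination `(1 - {x}) • (a ∘ ρ ^ ⌊x⌋) + {x} • (a ∘ ρ ^ (⌊x⌋ + 1))`, so shifting `x` by an integer
`L` with `a ∘ ρ ^ L = a` changes nothing. Conversely, a period `P > 0` gives `(Kt N P)ᵀ *ᵥ a = a`.
For non-constant `a` the vectors `w = a ∘ ρ ^ ⌊P⌋` and `w ∘ ρ` are distinct of the same Euclidean
norm as `a`, so by strict convexity a proper combination of them has smaller norm and cannot be `a`.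
Hence `P` is an integer with `a ∘ ρ ^ P = a`, and minimality of `L` gives `L ≤ P`.
-/
open Matrix BigOperators

open Equiv

section Permutations

variable {ι β : Type*}

theorem comp_perm_inv_eq_self_iff {σ : Perm ι} {a : ι → β} : a ∘ ⇑σ⁻¹ = a ↔ a ∘ ⇑σ = a := by
  constructor <;> intro h <;> ext i
  · simpa using (congrFun h (σ i)).symm
  · simpa using (congrFun h (σ⁻¹ i)).symm

theorem comp_zpow_add_of_comp_zpow_eq_self {σ : Perm ι} {a : ι → β} {L : ℤ}
    (h : a ∘ ⇑(σ ^ L) = a) (k : ℤ) : a ∘ ⇑(σ ^ (k + L)) = a ∘ ⇑(σ ^ k) := by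
  rw [add_comm, _root_.zpow_add, Perm.coe_mul, ← Function.comp_assoc, h]

theorem exists_eq_const_of_comp_finRotate_eq_self [Nonempty β] {N : ℕ} {v : Fin N → β}
    (h : v ∘ finRotate N = v) : ∃ c, ∀ i, v i = c := by
  cases N with
  | zero => exact ⟨Classical.arbitrary β, fun i => i.elim0⟩
  | succ n =>
    have step (i : Fin (n + 1)) : v (i + 1) = v i := by
      simpa using congrFun h i
    exact ⟨v 0, Fin.induction rfl fun i ih => by rw [← Fin.coeSucc_eq_succ, step, ih]⟩

variable [Fintype ι]

theorem norm_toLp_comp_perm (σ : Perm ι) (w : ι → ℝ) :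
    ‖WithLp.toLp 2 (w ∘ σ)‖ = ‖WithLp.toLp 2 w‖ := by
  simp only [EuclideanSpace.norm_eq, Function.comp_apply]
  rw [Equiv.sum_comp σ (fun i => ‖w i‖ ^ 2)]

theorem norm_toLp_combo_comp_perm_lt (σ : Perm ι) {w : ι → ℝ} (hw : w ≠ w ∘ σ) {ν : ℝ}
    (hν₀ : 0 < ν) (hν₁ : ν < 1) :
    ‖WithLp.toLp 2 ((1 - ν) • w + ν • (w ∘ σ))‖ < ‖WithLp.toLp 2 w‖ := by
  rw [WithLp.toLp_add, WithLp.toLp_smul, WithLp.toLp_smul]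
  exact norm_combo_lt_of_ne le_rfl (norm_toLp_comp_perm σ w).le
    (fun h => hw (WithLp.toLp_injective 2 h)) (by linarith) hν₀ (by ring)

end Permutations

section Shift

variable {N : ℕ}

theorem cyc_apply (i j : Fin N) : cyc N i j = if finRotate N j = i then 1 else 0 := by
  cases N with
  | zero => exact i.elim0
  | succ n => simp [cyc, Fin.ext_iff, Fin.val_add]

theorem vecMul_cyc (v : Fin N → ℝ) : v ᵥ* cyc N = v ∘ finRotate N := by
  ext j
  simp [vecMul, dotProduct, cyc_apply]

theorem mulVec_cyc (v : Fin N → ℝ) : cyc N *ᵥ v = v ∘ ⇑(finRotate N)⁻¹ := by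
  ext i
  simp only [mulVec, dotProduct, cyc_apply, ← Equiv.eq_symm_apply, ite_mul, one_mul, zero_mul,
    Finset.sum_ite_eq', Finset.mem_univ, if_true, Function.comp_apply, Perm.inv_def]

theorem vecMul_pow_of_vecMul_eq_comp {ι R : Type*} [Fintype ι] [DecidableEq ι] [CommSemiring R]
    {A : Matrix ι ι R} {σ : Perm ι} (hA : ∀ v, v ᵥ* A = v ∘ σ) (k : ℕ) (v : ι → R) :
    v ᵥ* A ^ k = v ∘ ⇑(σ ^ k) := by
  induction k with
  | zero => simp
  | succ k ih =>
    rw [pow_succ, ← vecMul_vecMul, ih, hA, pow_succ, Perm.coe_mul, Function.comp_assoc]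

theorem cyc_pow_mulVec (k : ℕ) (v : Fin N → ℝ) : cyc N ^ k *ᵥ v = v ∘ ⇑(finRotate N ^ k)⁻¹ := by
  rw [← vecMul_transpose, transpose_pow, ← inv_pow,
    vecMul_pow_of_vecMul_eq_comp (fun w => by rw [vecMul_transpose, mulVec_cyc])]

theorem vecMul_Kmat (v : Fin N → ℝ) (ν : ℝ) :
    v ᵥ* Kmat N ν = (1 - ν) • v + ν • (v ∘ finRotate N) := by
  rw [Kmat, vecMul_add, vecMul_smul, vecMul_smul, vecMul_one, vecMul_cyc]

theorem vecMul_Kt (v : Fin N → ℝ) (x : ℝ) :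
    v ᵥ* Kt N x = (v ∘ ⇑(finRotate N ^ ⌊x⌋)) ᵥ* Kmat N (Int.fract x) := by
  unfold Kt
  split_ifs with hx
  · rw [← vecMul_vecMul, vecMul_pow_of_vecMul_eq_comp vecMul_cyc, ← zpow_natCast,
      Int.toNat_of_nonneg hx]
  · rw [← vecMul_vecMul,
      vecMul_pow_of_vecMul_eq_comp (fun w => by rw [vecMul_transpose, mulVec_cyc]),
      inv_pow, ← zpow_natCast, ← _root_.zpow_neg, Int.toNat_of_nonneg (by omega), neg_neg]

theorem transpose_Kt_mulVec (a : Fin N → ℝ) (x : ℝ) :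
    (Kt N x)ᵀ *ᵥ a = (1 - Int.fract x) • (a ∘ ⇑(finRotate N ^ ⌊x⌋)) +
      Int.fract x • (a ∘ ⇑(finRotate N ^ (⌊x⌋ + 1))) := by
  rw [mulVec_transpose, vecMul_Kt, vecMul_Kmat, _root_.zpow_add_one, Perm.coe_mul,
    Function.comp_assoc]

end Shift

section Period

variable {N : ℕ} {a : Fin N → ℝ}

theorem transpose_Kt_mulVec_add_period {L : ℤ} (h : a ∘ ⇑(finRotate N ^ L) = a) (x : ℝ) :
    (Kt N (x + L))ᵀ *ᵥ a = (Kt N x)ᵀ *ᵥ a := by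
  simp only [transpose_Kt_mulVec, Int.floor_add_intCast, Int.fract_add_intCast,
    add_right_comm _ L 1, comp_zpow_add_of_comp_zpow_eq_self h]

theorem transpose_Kt_mulVec_eq_self_iff (ha : ¬∃ c, ∀ i, a i = c) {x : ℝ} :
    (Kt N x)ᵀ *ᵥ a = a ↔ Int.fract x = 0 ∧ a ∘ ⇑(finRotate N ^ ⌊x⌋) = a := by
  rw [transpose_Kt_mulVec, _root_.zpow_add_one, Perm.coe_mul, ← Function.comp_assoc]
  refine ⟨fun h => ?_, fun ⟨hx, hw⟩ => by simpa [hx] using hw⟩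
  by_cases hx : Int.fract x = 0
  · simpa [hx] using h
  have hw : a ∘ ⇑(finRotate N ^ ⌊x⌋) ≠ (a ∘ ⇑(finRotate N ^ ⌊x⌋)) ∘ finRotate N := by
    intro hw
    refine ha (exists_eq_const_of_comp_finRotate_eq_self
      ((finRotate N ^ ⌊x⌋).surjective.injective_comp_right ?_))
    change (a ∘ finRotate N) ∘ _ = a ∘ _
    rw [Function.comp_assoc, ← Perm.coe_mul, (Commute.self_zpow _ ⌊x⌋).eq, Perm.coe_mul,
      ← Function.comp_assoc, ← hw]
  have hlt := norm_toLp_combo_comp_perm_lt (finRotate N) hw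
    (lt_of_le_of_ne (Int.fract_nonneg x) (Ne.symm hx)) (Int.fract_lt_one x)
  rw [h, norm_toLp_comp_perm] at hlt
  exact (lt_irrefl _ hlt).elim

end Period

theorem template_mismatch_period_general (N L : ℕ) (a b : Fin N → ℝ)
    (hper : (cyc N) ^ L *ᵥ a = a)
    (hmin : ∀ L' : ℕ, 0 < L' → L' < L → (cyc N) ^ L' *ᵥ a ≠ a)
    (ha : ¬ ∃ c : ℝ, ∀ i, a i = c) :
    (∀ x : ℝ, b - (Kt N (x + L))ᵀ *ᵥ a = b - (Kt N x)ᵀ *ᵥ a) ∧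
    (∀ P : ℝ, 0 < P →
      (∀ x : ℝ, b - (Kt N (x + P))ᵀ *ᵥ a = b - (Kt N x)ᵀ *ᵥ a) → (L : ℝ) ≤ P) := by
  have hshift {n : ℕ} : cyc N ^ n *ᵥ a = a ↔ a ∘ ⇑(finRotate N ^ (n : ℤ)) = a := by
    rw [cyc_pow_mulVec, comp_perm_inv_eq_self_iff, zpow_natCast]
  refine ⟨fun x => ?_, fun P hP hPer => ?_⟩
  · rw [← Int.cast_natCast, transpose_Kt_mulVec_add_period (hshift.1 hper)]
  have hKt0 : (Kt N 0)ᵀ *ᵥ a = a := (transpose_Kt_mulVec_eq_self_iff ha).2 (by simp)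
  obtain ⟨hfract, hrot⟩ :=
    (transpose_Kt_mulVec_eq_self_iff ha).1 (by simpa [hKt0] using hPer 0)
  obtain ⟨n, hn⟩ : ∃ n : ℕ, ⌊P⌋ = n := Int.eq_ofNat_of_zero_le (Int.floor_nonneg.2 hP.le)
  have hPn : P = n := by rw [← Int.floor_add_fract P, hfract, hn]; simp
  rw [hn] at hrot
  rw [hPn] at hP ⊢
  exact_mod_cast not_lt.1 fun hnL => hmin n (by exact_mod_cast hP) hnL (hshift.2 hrot)

theorem template_mismatch_period (N L : ℕ) (a b : Fin N → ℝ)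
    (hL : 0 < L) (hper : (cyc N) ^ L *ᵥ a = a)
    (hmin : ∀ L' : ℕ, 0 < L' → L' < L → (cyc N) ^ L' *ᵥ a ≠ a)
    (ha : ¬ ∃ c : ℝ, ∀ i, a i = c) :
    (∀ x : ℝ, b - (Kt N (x + L))ᵀ *ᵥ a = b - (Kt N x)ᵀ *ᵥ a) ∧
    (∀ P : ℝ, 0 < P →
      (∀ x : ℝ, b - (Kt N (x + P))ᵀ *ᵥ a = b - (Kt N x)ᵀ *ᵥ a) → (L : ℝ) ≤ P) :=
  template_mismatch_period_general N L a b hper hmin ha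
end
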